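/- Fixed-point characterization: if Ω ⊆ X satisfies Ω ⊆ Pre^M(Ω, W), then Ω is robust M-step hold control invariant; i.e., from every x_0 ∈ Ω there exists an infinite M-step hold input sequence keeping the state in X at every time step and in Ω at every multiple of M, for all admissible disturbance realizations. -/

import Mathlib

/-- Robust `M`-step hold precursor set `Pre^M(S, W)` with time-varying
disturbance sets `W_t`. -/
def holdPre {n m o : ℕ} (A : Matrix (Fin n) (Fin n) ℝ)
    (B : Matrix (Fin n) (Fin m) ℝ) (E : Matrix (Fin n) (Fin o) ℝ)
    (X : Set (Fin n → ℝ)) (U : Set (Fin m → ℝ)) (W : ℕ → Set (Fin o → ℝ))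
    (M : ℕ) (S : Set (Fin n → ℝ)) : Set (Fin n → ℝ) :=
  {x0 | ∃ u ∈ U, ∀ w : ℕ → (Fin o → ℝ), (∀ t, w t ∈ W t) →
    ∀ x : ℕ → (Fin n → ℝ), x 0 = x0 →
      (∀ t, x (t + 1) = A.mulVec (x t) + B.mulVec u + E.mulVec (w t)) →
      (∀ t, 0 < t → t < M → x t ∈ X) ∧ x M ∈ S}

/-!
From `x₀ ∈ Ω` choose a hold input `π x₀` witnessing `x₀ ∈ Pre^M(Ω, W)`. Under the hold policy
`π`, the block of the closed loop between times `Mk` and `M(k+1)` is, after a time shift by `Mk`,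
a trajectory of the constant input `π (x (Mk))` driven by disturbances that are admissible because
the sets `W_t` are `M`-periodic. Since the conclusion of `Pre^M` only concerns times `≤ M`, it
applies to that block, so `x (Mk) ∈ Ω` gives `x (M(k+1)) ∈ Ω` and `x ∈ X` in between; induction
on `k` finishes the proof.
-/

section HoldControl

variable {n m o : ℕ} {A : Matrix (Fin n) (Fin n) ℝ} {B : Matrix (Fin n) (Fin m) ℝ}
  {E : Matrix (Fin n) (Fin o) ℝ} {X : Set (Fin n → ℝ)} {W : ℕ → Set (Fin o → ℝ)} {M : ℕ}

variable (A B E X W M) in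
def IsRobustHoldInput (S : Set (Fin n → ℝ)) (x₀ : Fin n → ℝ) (u : Fin m → ℝ) : Prop :=
  ∀ w : ℕ → (Fin o → ℝ), (∀ t, w t ∈ W t) →
    ∀ x : ℕ → (Fin n → ℝ), x 0 = x₀ →
      (∀ t, x (t + 1) = A.mulVec (x t) + B.mulVec u + E.mulVec (w t)) →
      (∀ t, 0 < t → t < M → x t ∈ X) ∧ x M ∈ S

theorem mem_holdPre_iff {U : Set (Fin m → ℝ)} {S : Set (Fin n → ℝ)} {x₀ : Fin n → ℝ} :
    x₀ ∈ holdPre A B E X U W M S ↔ ∃ u ∈ U, IsRobustHoldInput A B E X W M S x₀ u :=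
  Iff.rfl

theorem IsRobustHoldInput.guarantee_of_dynamics_lt {S : Set (Fin n → ℝ)} {x₀ : Fin n → ℝ}
    {u : Fin m → ℝ}
    (hu : IsRobustHoldInput A B E X W M S x₀ u)
    {w : ℕ → (Fin o → ℝ)} (hw : ∀ t, w t ∈ W t) {x : ℕ → (Fin n → ℝ)} (hx₀ : x 0 = x₀)
    (hdyn : ∀ t < M, x (t + 1) = A.mulVec (x t) + B.mulVec u + E.mulVec (w t)) :
    (∀ t, 0 < t → t < M → x t ∈ X) ∧ x M ∈ S := by
  let y : ℕ → (Fin n → ℝ) := fun t =>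
    Nat.rec x₀ (fun s ys => A.mulVec ys + B.mulVec u + E.mulVec (w s)) t
  have hyx : ∀ t ≤ M, y t = x t := by
    intro t ht
    induction t with
    | zero => exact hx₀.symm
    | succ t ih =>
      rw [hdyn t ht, ← ih (Nat.le_of_succ_le ht)]
  obtain ⟨hX, hS⟩ := hu w hw y rfl fun _ => rfl
  refine ⟨fun t ht htM => ?_, hyx M le_rfl ▸ hS⟩
  exact hyx t htM.le ▸ hX t ht htM

variable {Ω : Set (Fin n → ℝ)} {π : (Fin n → ℝ) → (Fin m → ℝ)}
  {w : ℕ → (Fin o → ℝ)} {x : ℕ → (Fin n → ℝ)}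

theorem holdLoop_block (hM : 0 < M) (hWper : Function.Periodic W M)
    (hπ : ∀ z ∈ Ω, IsRobustHoldInput A B E X W M Ω z (π z))
    (hw : ∀ t, w t ∈ W t)
    (hdyn : ∀ t, x (t + 1) =
      A.mulVec (x t) + B.mulVec (π (x (M * (t / M)))) + E.mulVec (w t))
    {k : ℕ} (hk : x (M * k) ∈ Ω) :
    (∀ r, 0 < r → r < M → x (M * k + r) ∈ X) ∧ x (M * k + M) ∈ Ω := by
  have hw_shift : ∀ s, w (M * k + s) ∈ W s := fun s => by
    rw [← hWper.nat_mul k s, Nat.cast_id, add_comm, mul_comm k]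
    exact hw _
  refine (hπ _ hk).guarantee_of_dynamics_lt hw_shift rfl fun s hs => ?_
  have hquot : (M * k + s) / M = k := by
    rw [Nat.mul_add_div hM, Nat.div_eq_of_lt hs, add_zero]
  simpa only [hquot, ← add_assoc] using hdyn (M * k + s)

theorem holdLoop_mem_mul (hM : 0 < M) (hWper : Function.Periodic W M)
    (hπ : ∀ z ∈ Ω, IsRobustHoldInput A B E X W M Ω z (π z))
    (hw : ∀ t, w t ∈ W t)
    (hdyn : ∀ t, x (t + 1) =
      A.mulVec (x t) + B.mulVec (π (x (M * (t / M)))) + E.mulVec (w t))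
    (hx₀ : x 0 ∈ Ω) (k : ℕ) : x (M * k) ∈ Ω := by
  induction k with
  | zero => simpa using hx₀
  | succ k ih => simpa only [mul_add_one] using (holdLoop_block hM hWper hπ hw hdyn ih).2

end HoldControl

/-- Fixed-point characterization: if `Ω ⊆ X` satisfies `Ω ⊆ Pre^M(Ω, W)` (with
`M`-periodic disturbance sets), then `Ω` is robust `M`-step hold control
invariant: there is a feedback policy `π`, applied with an `M`-step hold
(`u_t = π(x_{M⌊t/M⌋})`), whose closed-loop trajectories from any `x_0 ∈ Ω` use
admissible inputs, stay in `X` at every time step, and lie in `Ω` at every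
multiple of `M`, for all admissible disturbance realizations. -/
theorem fixed_point_invariance {n m o : ℕ} (A : Matrix (Fin n) (Fin n) ℝ)
    (B : Matrix (Fin n) (Fin m) ℝ) (E : Matrix (Fin n) (Fin o) ℝ)
    (X : Set (Fin n → ℝ)) (U : Set (Fin m → ℝ)) (W : ℕ → Set (Fin o → ℝ))
    (M : ℕ) (hM : 0 < M) (hWper : ∀ t, W (t + M) = W t)
    (Ω : Set (Fin n → ℝ)) (hΩX : Ω ⊆ X) (hfix : Ω ⊆ holdPre A B E X U W M Ω) :
    ∃ π : (Fin n → ℝ) → (Fin m → ℝ),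
      ∀ x0 ∈ Ω, ∀ w : ℕ → (Fin o → ℝ), (∀ t, w t ∈ W t) →
        ∀ x : ℕ → (Fin n → ℝ), x 0 = x0 →
          (∀ t, x (t + 1) =
            A.mulVec (x t) + B.mulVec (π (x (M * (t / M)))) + E.mulVec (w t)) →
          (∀ t, π (x (M * (t / M))) ∈ U) ∧ (∀ t, x t ∈ X) ∧
            (∀ t, M ∣ t → x t ∈ Ω) := by
  have hinput : ∀ z ∈ Ω, ∃ u ∈ U, IsRobustHoldInput A B E X W M Ω z u :=
    fun z hz => mem_holdPre_iff.mp (hfix hz)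
  choose! π hπU hπ using hinput
  refine ⟨π, fun x0 hx0 w hw x hx0eq hdyn => ?_⟩
  have hΩ := holdLoop_mem_mul hM hWper hπ hw hdyn (hx0eq ▸ hx0)
  refine ⟨fun t => hπU _ (hΩ _), fun t => ?_, fun t ⟨k, htk⟩ => htk ▸ hΩ k⟩
  rw [← Nat.div_add_mod t M]
  rcases Nat.eq_zero_or_pos (t % M) with hr | hr
  · exact hr ▸ hΩX (hΩ _)
  · exact (holdLoop_block hM hWper hπ hw hdyn (hΩ _)).1 _ hr (Nat.mod_lt t hM)
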